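/- Let G be a connected graph and v a cut vertex of G contained in blocks B_1,…,B_k, with v ∉ S. Then v is dominated by S in every spanning tree of G if and only if there exists an index i such that all neighbours of v within the block B_i belong to S. -/

import Mathlib

open SimpleGraph

variable {V : Type*}

/-- Number of connected components of a graph. -/
noncomputable def numComponents (G : SimpleGraph V) : ℕ := Nat.card G.ConnectedComponent

/-- A vertex is a cut vertex if its removal increases the number of connected components. -/
def IsCutVertex (G : SimpleGraph V) (v : V) : Prop :=
  numComponents G < numComponents (G.induce {u | u ≠ v})

/-- `T` is a spanning tree of `G`: a subgraph on all vertices of `G` that is a tree. -/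
def IsSpanningTree (G T : SimpleGraph V) : Prop := T ≤ G ∧ T.IsTree

/-- `v` is dominated by `S` in the graph `T`. -/
def DominatedIn (T : SimpleGraph V) (S : Set V) (v : V) : Prop :=
  v ∈ S ∨ ∃ u ∈ S, T.Adj v u

/-- `v` is simultaneously dominated by `S`: dominated in every spanning tree of `G`. -/
def SimDominated (G : SimpleGraph V) (S : Set V) (v : V) : Prop :=
  ∀ T : SimpleGraph V, IsSpanningTree G T → DominatedIn T S v

/-- `S` is a simultaneous dominating set of `G`. -/
def IsSDSet (G : SimpleGraph V) (S : Set V) : Prop := ∀ v, SimDominated G S v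

/-- `C` is a vertex cover of `G`. -/
def IsVertexCover (G : SimpleGraph V) (C : Set V) : Prop :=
  ∀ ⦃u v : V⦄, G.Adj u v → u ∈ C ∨ v ∈ C

/-- A block of `G`: a maximal vertex set inducing a connected subgraph without cut vertices. -/
def IsBlock (G : SimpleGraph V) (B : Set V) : Prop :=
  B.Nonempty ∧ (G.induce B).Connected ∧ (∀ x, ¬ IsCutVertex (G.induce B) x) ∧
    ∀ B' : Set V, B ⊆ B' → (G.induce B').Connected →
      (∀ x, ¬ IsCutVertex (G.induce B') x) → B' = B

/-- 2-connected: connected, at least 3 vertices, no cut vertex. -/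
def TwoConnected (G : SimpleGraph V) [Fintype V] : Prop :=
  G.Connected ∧ 3 ≤ Fintype.card V ∧ ∀ v, ¬ IsCutVertex G v

/-- Colours 1, 0, 0̂. -/
inductive Col : Type
  | one | zero | zhat
deriving DecidableEq

/-- `S` is an `f`-respecting simultaneous dominating set of `G`. -/
def RespSDS (G : SimpleGraph V) (f : V → Col) (S : Set V) : Prop :=
  (∀ v, f v = Col.one → v ∈ S) ∧ ∀ v, f v = Col.zhat → SimDominated G S v

/-- A minimum `f`-respecting simultaneous dominating set. -/
def MinRespSDS (G : SimpleGraph V) (f : V → Col) (S : Set V) : Prop :=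
  RespSDS G f S ∧ ∀ S' : Set V, RespSDS G f S' → S.ncard ≤ S'.ncard

/-!
A block is a maximal vertex set inducing a connected graph that stays connected after deleting
any one vertex, and such a set absorbs every path joining two of its vertices. So in a spanning
tree the tree path from `v` to another vertex of a block through `v` stays inside that block:
`v` has a tree neighbour in every block containing it, which lies in `S` if the block's
neighbours of `v` all do. Conversely, if every block through `v` has a neighbour of `v` outside
`S`, deleting all edges from `v` to `S` leaves `G` connected, and a spanning tree of the rest
does not dominate `v`.
-/

namespace SimpleGraph

lemma Walk.IsPath.notMem_support_takeUntil_or_dropUntil [DecidableEq V] {G : SimpleGraph V}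
    {a b x y : V} {p : G.Walk a b} (hp : p.IsPath) (hy : y ∈ p.support) (hxy : x ≠ y) :
    x ∉ (p.takeUntil y hy).support ∨ x ∉ (p.dropUntil y hy).support := by
  by_contra! ⟨hxt, hxd⟩
  have hnd := hp.support_nodup
  rw [← p.take_spec hy, Walk.support_append] at hnd
  rw [← Walk.cons_tail_support, List.mem_cons] at hxd
  exact List.disjoint_of_nodup_append hnd hxt (hxd.resolve_left hxy)

lemma Walk.reachable_induce {G : SimpleGraph V} {s : Set V} {u v : V} (p : G.Walk u v)
    (hp : {x | x ∈ p.support} ⊆ s) :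
    (G.induce s).Reachable ⟨u, hp p.start_mem_support⟩ ⟨v, hp p.end_mem_support⟩ :=
  (p.connected_induce_support.preconnected ⟨u, p.start_mem_support⟩
    ⟨v, p.end_mem_support⟩).map (induceHomOfLE G hp).toHom

lemma preconnected_induce_of_forall_exists_walk {G : SimpleGraph V} {s t : Set V}
    (ht : (G.induce t).Preconnected) (hts : t ⊆ s)
    (h : ∀ y ∈ s, ∃ z ∈ t, ∃ p : G.Walk y z, {x | x ∈ p.support} ⊆ s) :
    (G.induce s).Preconnected := by
  have reach (y : s) : ∃ z : t, (G.induce s).Reachable y (induceHomOfLE G hts z) := by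
    obtain ⟨z, hz, p, hp⟩ := h y y.2
    exact ⟨⟨z, hz⟩, p.reachable_induce hp⟩
  intro y y'
  obtain ⟨z, hyz⟩ := reach y
  obtain ⟨z', hyz'⟩ := reach y'
  exact hyz.trans (((ht z z').map (induceHomOfLE G hts).toHom).trans hyz'.symm)

lemma Reachable.of_forall_adj_reachable {G H : SimpleGraph V}
    (h : ∀ a b, G.Adj a b → H.Reachable a b) {u v : V} (huv : G.Reachable u v) :
    H.Reachable u v := by
  obtain ⟨p⟩ := huv
  induction p with
  | nil => rfl
  | cons hadj _ ih => exact (h _ _ hadj).trans ih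

end SimpleGraph

lemma not_isCutVertex_iff {W : Type*} [Finite W] {H : SimpleGraph W} (hH : H.Connected) (x : W) :
    ¬ IsCutVertex H x ↔ (H.induce {u | u ≠ x}).Preconnected := by
  have : Nonempty H.ConnectedComponent := ⟨H.connectedComponentMk x⟩
  have : Subsingleton H.ConnectedComponent := hH.preconnected.subsingleton_connectedComponent
  rw [IsCutVertex, numComponents, numComponents, Nat.card_unique, not_lt,
    Finite.card_le_one_iff_subsingleton]
  exact ⟨fun _ u u' => ConnectedComponent.exact (Subsingleton.elim _ _),
    Preconnected.subsingleton_connectedComponent⟩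

lemma IsCutVertex.nontrivial {G : SimpleGraph V} {v : V} (hv : IsCutVertex G v) : Nontrivial V := by
  by_contra! h
  have : IsEmpty {u | u ≠ v} := ⟨fun u => u.2 (Subsingleton.elim _ _)⟩
  simp [IsCutVertex, numComponents] at hv

def IsNonseparable (G : SimpleGraph V) (s : Set V) : Prop :=
  (G.induce s).Connected ∧ ∀ x ∈ s, (G.induce (s \ {x})).Preconnected

def induceInduceIso (G : SimpleGraph V) (s : Set V) (x : s) :
    (G.induce s).induce {u | u ≠ x} ≃g G.induce (s \ {(x : V)}) where
  toFun u := ⟨u.1.1, u.1.2, fun h => u.2 (Subtype.ext h)⟩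
  invFun u := ⟨⟨u.1, u.2.1⟩, fun h => u.2.2 (congrArg Subtype.val h)⟩
  map_rel_iff' := Iff.rfl

lemma isNonseparable_iff [Finite V] {G : SimpleGraph V} {s : Set V} :
    IsNonseparable G s ↔ (G.induce s).Connected ∧ ∀ x, ¬ IsCutVertex (G.induce s) x := by
  refine and_congr_right fun hs => ?_
  simp only [not_isCutVertex_iff hs, (induceInduceIso G _ _).preconnected_iff, Subtype.forall]

lemma isBlock_iff_maximal [Finite V] {G : SimpleGraph V} {B : Set V} :
    IsBlock G B ↔ Maximal (IsNonseparable G) B := by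
  simp only [IsBlock, Maximal, isNonseparable_iff]
  refine ⟨fun ⟨_, hc, hcut, hmax⟩ => ⟨⟨hc, hcut⟩, fun B' ⟨hc', hcut'⟩ hle =>
      (hmax B' hle hc' hcut').le⟩,
    fun ⟨⟨hc, hcut⟩, hmax⟩ => ⟨Set.nonempty_coe_sort.mp hc.nonempty, hc, hcut,
      fun B' hle hc' hcut' => (hmax ⟨hc', hcut'⟩ hle).antisymm hle⟩⟩

lemma IsNonseparable.preconnected_diff {G : SimpleGraph V} {s : Set V} (hs : IsNonseparable G s)
    (x : V) : (G.induce (s \ {x})).Preconnected := by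
  by_cases hx : x ∈ s
  · exact hs.2 x hx
  · rw [Set.sdiff_singleton_eq_self hx]
    exact hs.1.preconnected

lemma isNonseparable_pair {G : SimpleGraph V} {a b : V} (h : G.Adj a b) :
    IsNonseparable G {a, b} := by
  refine ⟨induce_pair_connected_of_adj h, fun x _ => ?_⟩
  have : Subsingleton ↑(({a, b} : Set V) \ {x}) := by
    rw [Set.subsingleton_coe]
    rintro y ⟨hy, hyx⟩ z ⟨hz, hzx⟩
    simp only [Set.mem_insert_iff, Set.mem_singleton_iff] at *
    grind
  exact Preconnected.of_subsingleton

lemma exists_isBlock_of_adj [Finite V] {G : SimpleGraph V} {a b : V} (h : G.Adj a b) :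
    ∃ B, IsBlock G B ∧ a ∈ B ∧ b ∈ B := by
  obtain ⟨B, hle, hB⟩ := Finite.exists_le_maximal (isNonseparable_pair h)
  exact ⟨B, isBlock_iff_maximal.mpr hB, hle (by simp), hle (by simp)⟩

/-- Deleting a vertex `x` cuts the path into at most two pieces, each still attached to an
endpoint other than `x`. -/
lemma IsNonseparable.union_support {G : SimpleGraph V} {B : Set V} (hB : IsNonseparable G B)
    {a b : V} {p : G.Walk a b} (hp : p.IsPath) (ha : a ∈ B) (hb : b ∈ B) :
    IsNonseparable G (B ∪ {x | x ∈ p.support}) := by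
  classical
  refine ⟨induce_union_connected hB.1.preconnected p.connected_induce_support.preconnected
    ⟨a, ha, p.start_mem_support⟩, fun x _ => ?_⟩
  refine preconnected_induce_of_forall_exists_walk (hB.preconnected_diff x)
    (Set.sdiff_subset_sdiff_left Set.subset_union_left) ?_
  rintro y ⟨hyB | hyp, hyx⟩
  · exact ⟨y, ⟨hyB, hyx⟩, Walk.nil, by simpa using ⟨Or.inl hyB, hyx⟩⟩
  have hxy : x ≠ y := fun h => hyx (h ▸ rfl)
  have escape {z : V} (hz : z ∈ B) (q : G.Walk y z) (hqp : ∀ w ∈ q.support, w ∈ p.support)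
      (hqx : x ∉ q.support) : ∃ z ∈ B \ {x}, ∃ q : G.Walk y z,
        {w | w ∈ q.support} ⊆ (B ∪ {w | w ∈ p.support}) \ {x} :=
    ⟨z, ⟨hz, fun h => hqx (h ▸ q.end_mem_support)⟩, q,
      fun w hw => ⟨Or.inr (hqp w hw), fun h => hqx (h ▸ hw)⟩⟩
  rcases hp.notMem_support_takeUntil_or_dropUntil hyp hxy with hx | hx
  · exact escape ha (p.takeUntil y hyp).reverse
      (fun w hw => p.support_takeUntil_subset_support hyp (by simpa using hw)) (by simpa using hx)
  · exact escape hb (p.dropUntil y hyp) (fun w hw => p.support_dropUntil_subset_support hyp hw) hx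

lemma IsBlock.support_subset [Finite V] {G : SimpleGraph V} {B : Set V} (hB : IsBlock G B)
    {a b : V} {p : G.Walk a b} (hp : p.IsPath) (ha : a ∈ B) (hb : b ∈ B) :
    {x | x ∈ p.support} ⊆ B := by
  have hB := isBlock_iff_maximal.mp hB
  exact Set.subset_union_right.trans
    (hB.2 (hB.1.union_support hp ha hb) Set.subset_union_left)

lemma IsBlock.exists_adj_mem_of_le [Finite V] {G T : SimpleGraph V} {B : Set V}
    (hB : IsBlock G B) (hTG : T ≤ G) (hT : T.Preconnected) {v w : V} (hv : v ∈ B) (hw : w ∈ B)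
    (hvw : v ≠ w) : ∃ u ∈ B, T.Adj v u := by
  classical
  obtain ⟨p⟩ := hT v w
  have hnil : ¬ p.bypass.Nil := Walk.not_nil_of_ne hvw
  have hsupp := hB.support_subset (p.bypass_isPath.mapLe hTG) hv hw
  rw [Walk.support_mapLe_eq_support] at hsupp
  exact ⟨p.bypass.snd, hsupp (p.bypass.getVert_mem_support 1), p.bypass.adj_snd hnil⟩

lemma IsBlock.exists_mem_ne [Finite V] {G : SimpleGraph V} {B : Set V} (hB : IsBlock G B)
    {v w : V} (hvw : G.Adj v w) : ∃ u ∈ B, u ≠ v := by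
  by_contra! h
  have hsub : B ⊆ {v, w} := fun u hu => Or.inl (h u hu)
  have hwB : w ∈ B := (isBlock_iff_maximal.mp hB).2 (isNonseparable_pair hvw) hsub (by simp)
  exact hvw.ne' (h w hwB)

/-- An edge `v u` with `u ∈ S` is bypassed by the edge from `v` to a neighbour `u' ∉ S` in a
block containing `v` and `u`, followed by a path from `u'` to `u` in that block avoiding `v`. -/
lemma connected_deleteEdges_of_forall_isBlock [Finite V] {G : SimpleGraph V} (hG : G.Connected)
    {S : Set V} {v : V}
    (h : ∀ B, IsBlock G B → v ∈ B → ∃ u ∈ B, G.Adj v u ∧ u ∉ S) :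
    (G.deleteEdges ((fun u => s(v, u)) '' S)).Connected := by
  set H := G.deleteEdges ((fun u => s(v, u)) '' S)
  have adj_of_ne {a b : V} (hab : G.Adj a b) (ha : a ≠ v) (hb : b ≠ v) : H.Adj a b := by
    refine (deleteEdges_adj ..).mpr ⟨hab, ?_⟩
    rintro ⟨u, -, hu⟩
    rw [Sym2.eq_iff] at hu
    grind
  have adj_of_notMem {u : V} (hvu : G.Adj v u) (hu : u ∉ S) : H.Adj v u := by
    refine (deleteEdges_adj ..).mpr ⟨hvu, ?_⟩
    rintro ⟨u', hu', he⟩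
    rw [Sym2.eq_iff] at he
    grind
  have reach_of_adj_v {u : V} (hvu : G.Adj v u) : H.Reachable v u := by
    by_cases hu : u ∈ S
    · obtain ⟨B, hB, hvB, huB⟩ := exists_isBlock_of_adj hvu
      obtain ⟨u', hu'B, hvu', hu'S⟩ := h B hB hvB
      let f : G.induce (B \ {v}) →g H :=
        ⟨Subtype.val, fun {x y} hxy => adj_of_ne hxy x.2.2 y.2.2⟩
      have hu'u := (isBlock_iff_maximal.mp hB).1.preconnected_diff v
        ⟨u', hu'B, hvu'.ne'⟩ ⟨u, huB, hvu.ne'⟩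
      exact (adj_of_notMem hvu' hu'S).reachable.trans (hu'u.map f)
    · exact (adj_of_notMem hvu hu).reachable
  have := hG.nonempty
  refine ⟨fun a b => (hG.preconnected a b).of_forall_adj_reachable fun a b hab => ?_⟩
  by_cases ha : a = v
  · exact ha ▸ reach_of_adj_v (ha ▸ hab)
  by_cases hb : b = v
  · exact (hb ▸ reach_of_adj_v (hb ▸ hab.symm)).symm
  exact (adj_of_ne hab ha hb).reachable

/-- For a cut vertex `v ∉ S` of connected `G`, `v` is simultaneously dominated by
`S` iff some block `B` containing `v` has all of `v`'s neighbours in `B` belonging to `S`. -/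
theorem stmt2 [Fintype V] (G : SimpleGraph V) (hG : G.Connected) (S : Set V) (v : V)
    (hv : IsCutVertex G v) (hvS : v ∉ S) :
    SimDominated G S v ↔
      ∃ B : Set V, IsBlock G B ∧ v ∈ B ∧ ∀ u ∈ B, G.Adj v u → u ∈ S := by
  constructor
  · intro hdom
    by_contra! h
    obtain ⟨T, hTH, hT⟩ := (connected_deleteEdges_of_forall_isBlock hG h).exists_isTree_le
    rcases hdom T ⟨hTH.trans (deleteEdges_le _), hT⟩ with hvS' | ⟨u, huS, hvu⟩
    · exact hvS hvS'
    · exact ((deleteEdges_adj ..).mp (hTH hvu)).2 ⟨u, huS, rfl⟩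
  · rintro ⟨B, hB, hvB, hBS⟩ T ⟨hTG, hT⟩
    have := hv.nontrivial
    obtain ⟨w, hvw⟩ := hG.preconnected.exists_adj_of_nontrivial v
    obtain ⟨w', hw'B, hw'v⟩ := hB.exists_mem_ne hvw
    obtain ⟨u, huB, hvu⟩ :=
      hB.exists_adj_mem_of_le hTG hT.connected.preconnected hvB hw'B hw'v.symm
    exact Or.inr ⟨u, hBS u huB (hTG hvu), hvu⟩
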